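/- arXiv:2107.01317 — 7 statements merged into one kernel-verified Lean document; each statement's English description precedes it below -/
import Mathlib

section
/- Let n > 2 and 0 < q < n be coprime integers and let n/q = [b_1,…,b_s] be its Hirzebruch–Jung continued fraction expansion with all b_i ≥ 2. Let q' be the unique integer with 0 < q' < n and q·q' ≡ 1 (mod n), and let m be the integer with q·q' = 1 + m·n. Set N = 2q − m + 2n − q' and Q = 2q − m. Then 0 < Q < N, gcd(N, Q) = 1, and the sequence [b_1 + 1, b_2, …, b_s, 2] (all of whose entries are ≥ 2) is the Hirzebruch–Jung continued fraction expansion of N/Q. -/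
/-!
Let `M L` be the product of the matrices `!![a, -1; 1, 0]` over `a ∈ L`. It has determinant `1`,
and for entries `≥ 2` its first column `(p, p')` satisfies `0 ≤ p' < p` and `[a₁,…,aₛ] = p / p'`.
As `n / q` is in lowest terms, the first column of `M L` is `(n, q)`. Since
`(M L)ᵀ = J (M L.reverse) J` with `J = diag(1, -1)`, the same bound for the reversed list gives
`0 ≤ -M L 0 1 < n`, and with the determinant this forces the second column to be `(-q', -m)`.
Raising the first entry by one and appending a `2` are a row and a column operation on `M L`,
which turn its first column into `(N, Q)`.
-/

open Matrix

def hj : List ℤ → ℚ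
  | [] => 0
  | [a] => (a : ℚ)
  | a :: l => (a : ℚ) - 1 / hj l

def hjStep (a : ℤ) : Matrix (Fin 2) (Fin 2) ℤ := !![a, -1; 1, 0]

def hjMat (L : List ℤ) : Matrix (Fin 2) (Fin 2) ℤ := (L.map hjStep).prod

@[simp]
lemma hjMat_nil : hjMat [] = 1 := rfl

@[simp]
lemma hjMat_cons (a : ℤ) (l : List ℤ) : hjMat (a :: l) = hjStep a * hjMat l := rfl

lemma hjMat_append (l l' : List ℤ) : hjMat (l ++ l') = hjMat l * hjMat l' := by
  simp [hjMat]

lemma det_hjMat (L : List ℤ) : (hjMat L).det = 1 := by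
  induction L with
  | nil => simp
  | cons a l ih => rw [hjMat_cons, det_mul, ih, hjStep, det_fin_two_of]; ring

lemma isCoprime_hjMat_col (L : List ℤ) : IsCoprime (hjMat L 0 0) (hjMat L 1 0) := by
  refine ⟨hjMat L 1 1, -hjMat L 0 1, ?_⟩
  have h := det_hjMat L
  rw [det_fin_two] at h
  linarith

lemma hjStep_mul_apply_zero (a : ℤ) (M : Matrix (Fin 2) (Fin 2) ℤ) (j : Fin 2) :
    (hjStep a * M) 0 j = a * M 0 j - M 1 j := by
  simp [hjStep, mul_apply, Fin.sum_univ_two, sub_eq_add_neg]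

lemma hjStep_mul_apply_one (a : ℤ) (M : Matrix (Fin 2) (Fin 2) ℤ) (j : Fin 2) :
    (hjStep a * M) 1 j = M 0 j := by
  simp [hjStep, mul_apply, Fin.sum_univ_two]

lemma hjMat_col_bounds {L : List ℤ} (hL : ∀ a ∈ L, 2 ≤ a) :
    0 ≤ hjMat L 1 0 ∧ hjMat L 1 0 < hjMat L 0 0 := by
  induction L with
  | nil => simp
  | cons a l ih =>
    obtain ⟨h₀, h₁⟩ := ih fun b hb => hL b (List.mem_cons_of_mem a hb)
    have ha := hL a List.mem_cons_self
    rw [hjMat_cons, hjStep_mul_apply_zero, hjStep_mul_apply_one]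
    constructor <;> nlinarith

/-- Holds also for `l = []`, where `hj [] = 0` and `0⁻¹ = 0`. -/
lemma hj_cons (a : ℤ) (l : List ℤ) : hj (a :: l) = a - (hj l)⁻¹ := by
  cases l <;> simp [hj]

lemma hj_eq_hjMat_div {L : List ℤ} (hL : ∀ a ∈ L, 2 ≤ a) :
    hj L = (hjMat L 0 0 : ℚ) / hjMat L 1 0 := by
  induction L with
  | nil => simp [hj]
  | cons a l ih =>
    have hpos : (0 : ℚ) < hjMat l 0 0 := by
      have := hjMat_col_bounds fun b hb => hL b (List.mem_cons_of_mem a hb)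
      exact_mod_cast this.1.trans_lt this.2
    rw [hj_cons, ih fun b hb => hL b (List.mem_cons_of_mem a hb), hjMat_cons,
      hjStep_mul_apply_zero, hjStep_mul_apply_one, inv_div]
    push_cast
    field_simp

lemma transpose_hjMat (L : List ℤ) :
    (hjMat L)ᵀ = !![1, 0; 0, -1] * hjMat L.reverse * !![1, 0; 0, -1] := by
  induction L with
  | nil => simp [← one_fin_two]
  | cons a l ih =>
    have hstep : (hjStep a)ᵀ = !![1, 0; 0, -1] * hjStep a * !![1, 0; 0, -1] := by
      ext i j; fin_cases i <;> fin_cases j <;> simp [hjStep]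
    have hJJ : !![(1 : ℤ), 0; 0, -1] * !![1, 0; 0, -1] = 1 := by
      ext i j; fin_cases i <;> fin_cases j <;> simp
    have hJ (X : Matrix (Fin 2) (Fin 2) ℤ) : !![1, 0; 0, -1] * (!![1, 0; 0, -1] * X) = X := by
      rw [← Matrix.mul_assoc, hJJ, Matrix.one_mul]
    rw [hjMat_cons, transpose_mul, ih, hstep, List.reverse_cons, hjMat_append]
    simp only [hjMat_cons, hjMat_nil, mul_one, Matrix.mul_assoc, hJ]

lemma hjMat_row_bounds {L : List ℤ} (hL : ∀ a ∈ L, 2 ≤ a) :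
    0 ≤ -hjMat L 0 1 ∧ -hjMat L 0 1 < hjMat L 0 0 := by
  have h := transpose_hjMat L
  have h₀₀ : hjMat L 0 0 = hjMat L.reverse 0 0 := by
    simpa [mul_apply, Fin.sum_univ_two, vecMul, dotProduct] using congrFun (congrFun h 0) 0
  have h₀₁ : hjMat L 0 1 = -hjMat L.reverse 1 0 := by
    simpa [mul_apply, Fin.sum_univ_two, vecMul, dotProduct] using congrFun (congrFun h 1) 0
  have := hjMat_col_bounds fun a ha => hL a (List.mem_reverse.mp ha)
  omega

lemma hjMat_succ_cons_append_two (a : ℤ) (t : List ℤ) :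
    hjMat ((a + 1) :: (t ++ [2])) 0 0 =
        2 * (hjMat (a :: t) 0 0 + hjMat (a :: t) 1 0) + hjMat (a :: t) 0 1 + hjMat (a :: t) 1 1 ∧
      hjMat ((a + 1) :: (t ++ [2])) 1 0 = 2 * hjMat (a :: t) 1 0 + hjMat (a :: t) 1 1 := by
  simp only [hjMat_cons, hjMat_append, hjMat_nil, mul_one, hjStep, mul_apply, Fin.sum_univ_two,
    of_apply, cons_val', cons_val_zero, cons_val_one, cons_val_fin_one]
  constructor <;> ring

lemma two_le_of_mem_succ_cons_append_two {a : ℤ} {t : List ℤ} (h : ∀ b ∈ a :: t, 2 ≤ b) :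
    ∀ x ∈ (a + 1) :: (t ++ [2]), 2 ≤ x := by
  have := h a List.mem_cons_self
  simp only [List.mem_cons, List.mem_append, List.not_mem_nil, or_false, forall_eq_or_imp]
  exact ⟨by omega, fun x hx => hx.elim (fun hx => h x (List.mem_cons_of_mem a hx)) (by omega)⟩

lemma hjMat_col_eq_of_hj_eq_div {L : List ℤ} (hL : ∀ a ∈ L, 2 ≤ a) {n q : ℤ} (hn : 0 < n)
    (hq : 0 < q) (hcop : IsCoprime n q) (h : hj L = n / q) :
    hjMat L 0 0 = n ∧ hjMat L 1 0 = q := by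
  have hpos : 0 < hjMat L 1 0 := by
    refine (hjMat_col_bounds hL).1.lt_of_ne fun h₀ => ?_
    have : (0 : ℚ) < n / q := by positivity
    rw [← h, hj_eq_hjMat_div hL, ← h₀] at this
    simp at this
  exact Rat.div_int_inj hpos hq (Int.isCoprime_iff_gcd_eq_one.mp (isCoprime_hjMat_col L))
    (Int.isCoprime_iff_gcd_eq_one.mp hcop) ((hj_eq_hjMat_div hL).symm.trans h)

lemma hjMat_col_one_eq {L : List ℤ} (hL : ∀ a ∈ L, 2 ≤ a) {n q q' m : ℤ}
    (h₀₀ : hjMat L 0 0 = n) (h₁₀ : hjMat L 1 0 = q) (hcop : IsCoprime q n)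
    (hq'0 : 0 ≤ q') (hq'n : q' < n) (hm : q * q' = 1 + m * n) :
    hjMat L 0 1 = -q' ∧ hjMat L 1 1 = -m := by
  have hdet : n * hjMat L 1 1 - hjMat L 0 1 * q = 1 := by
    have := det_hjMat L
    rwa [det_fin_two, h₀₀, h₁₀] at this
  have hrow := hjMat_row_bounds hL
  have hdvd : n ∣ -hjMat L 0 1 - q' :=
    hcop.symm.dvd_of_dvd_mul_left ⟨-hjMat L 1 1 - m, by linear_combination hdet - hm⟩
  have h₀₁ : hjMat L 0 1 = -q' := by
    have := Int.eq_zero_of_abs_lt_dvd hdvd (abs_sub_lt_iff.mpr ⟨by omega, by omega⟩)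
    omega
  refine ⟨h₀₁, mul_left_cancel₀ (show n ≠ 0 by omega) ?_⟩
  linear_combination hdet - hm + q * h₀₁

theorem stmt0_general (n q q' m : ℤ) (hq0 : 0 < q) (hqn : q < n)
    (hcop : IsCoprime q n)
    (hq'0 : 0 < q') (hq'n : q' < n)
    (hm : q * q' = 1 + m * n)
    (L : List ℤ) (hL : L ≠ []) (hb : ∀ b ∈ L, 2 ≤ b)
    (hval : hj L = (n : ℚ) / (q : ℚ)) :
    0 < 2 * q - m ∧ 2 * q - m < 2 * q - m + 2 * n - q' ∧
      Int.gcd (2 * q - m + 2 * n - q') (2 * q - m) = 1 ∧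
      (∀ x ∈ (L.headI + 1) :: (L.tail ++ [2]), 2 ≤ x) ∧
      hj ((L.headI + 1) :: (L.tail ++ [2])) =
        ((2 * q - m + 2 * n - q' : ℤ) : ℚ) / ((2 * q - m : ℤ) : ℚ) := by
  obtain ⟨a, t, rfl⟩ := List.exists_cons_of_ne_nil hL
  obtain ⟨h₀₀, h₁₀⟩ := hjMat_col_eq_of_hj_eq_div hb (by omega) hq0 hcop.symm hval
  obtain ⟨h₀₁, h₁₁⟩ := hjMat_col_one_eq hb h₀₀ h₁₀ hcop hq'0.le hq'n hm
  obtain ⟨hN, hQ⟩ := hjMat_succ_cons_append_two a t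
  rw [h₀₀, h₁₀, h₀₁, h₁₁] at hN
  rw [h₁₀, h₁₁] at hQ
  have hb' := two_le_of_mem_succ_cons_append_two hb
  have hmq : m < q := by nlinarith
  refine ⟨by omega, by omega, ?_, hb', ?_⟩
  · have := isCoprime_hjMat_col ((a + 1) :: (t ++ [2]))
    rw [hN, hQ] at this
    convert Int.isCoprime_iff_gcd_eq_one.mp this using 2 <;> ring
  · rw [List.headI_cons, List.tail_cons, hj_eq_hjMat_div hb', hN, hQ]
    push_cast
    ring

/-- Let `n > 2` and `0 < q < n` be coprime, let `n/q = [b₁,…,bₛ]` be its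
Hirzebruch–Jung continued fraction expansion with all `bᵢ ≥ 2`, let `q'` be the
inverse of `q` mod `n` with `0 < q' < n`, and let `m` satisfy `q·q' = 1 + m·n`.
With `N = 2q − m + 2n − q'` and `Q = 2q − m`, we have `0 < Q < N`,
`gcd(N,Q) = 1`, and `[b₁+1, b₂, …, bₛ, 2]` (all of whose entries are `≥ 2`) is
the Hirzebruch–Jung continued fraction expansion of `N/Q`. -/
theorem stmt0 (n q q' m : ℤ) (hn : 2 < n) (hq0 : 0 < q) (hqn : q < n)
    (hcop : IsCoprime q n)
    (hq'0 : 0 < q') (hq'n : q' < n) (hmod : n ∣ q * q' - 1)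
    (hm : q * q' = 1 + m * n)
    (L : List ℤ) (hL : L ≠ []) (hb : ∀ b ∈ L, 2 ≤ b)
    (hval : hj L = (n : ℚ) / (q : ℚ)) :
    0 < 2 * q - m ∧ 2 * q - m < 2 * q - m + 2 * n - q' ∧
      Int.gcd (2 * q - m + 2 * n - q') (2 * q - m) = 1 ∧
      (∀ x ∈ (L.headI + 1) :: (L.tail ++ [2]), 2 ≤ x) ∧
      hj ((L.headI + 1) :: (L.tail ++ [2])) =
        ((2 * q - m + 2 * n - q' : ℤ) : ℚ) / ((2 * q - m : ℤ) : ℚ) :=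
  stmt0_general n q q' m hq0 hqn hcop hq'0 hq'n hm L hL hb hval
end

section
/- Let n > 2 and 0 < q < n be coprime integers and let n/q = [b_1,…,b_s] be its Hirzebruch–Jung continued fraction expansion with all b_i ≥ 2. Let q' be the unique integer with 0 < q' < n and q·q' ≡ 1 (mod n), and let m be the integer with q·q' = 1 + m·n. Set N = 2q − m + 2n − q' and Q' = q + n. Then 0 < Q' < N, and the reversed sequence [2, b_s, …, b_2, b_1 + 1] is the Hirzebruch–Jung continued fraction expansion of N/Q'; equivalently, Q' = q + n is the multiplicative inverse of Q = 2q − m modulo N. -/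
open Matrix

def hjMatrix (l : List ℤ) : Matrix (Fin 2) (Fin 2) ℤ := (l.map hjStep).prod

@[simp]
lemma hjMatrix_nil : hjMatrix [] = 1 := rfl

lemma hjMatrix_cons (a : ℤ) (l : List ℤ) : hjMatrix (a :: l) = hjStep a * hjMatrix l := by
  simp [hjMatrix]

lemma hjMatrix_append (l l' : List ℤ) : hjMatrix (l ++ l') = hjMatrix l * hjMatrix l' := by
  simp [hjMatrix]

lemma hjMatrix_singleton (a : ℤ) : hjMatrix [a] = hjStep a := by
  simp [hjMatrix]

lemma hjMatrix_cons_zero (a : ℤ) (l : List ℤ) (j : Fin 2) :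
    hjMatrix (a :: l) 0 j = a * hjMatrix l 0 j - hjMatrix l 1 j := by
  simp [hjMatrix_cons, hjStep, mul_apply, Fin.sum_univ_two, sub_eq_add_neg]

lemma hjMatrix_cons_one (a : ℤ) (l : List ℤ) (j : Fin 2) :
    hjMatrix (a :: l) 1 j = hjMatrix l 0 j := by
  simp [hjMatrix_cons, hjStep, mul_apply, Fin.sum_univ_two]

lemma det_hjMatrix (l : List ℤ) : (hjMatrix l).det = 1 := by
  induction l with
  | nil => simp
  | cons a l ih =>
    rw [hjMatrix_cons, det_mul, ih, hjStep, det_fin_two_of]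
    norm_num

lemma hjMatrix_reverse (l : List ℤ) :
    hjMatrix l.reverse =
      !![hjMatrix l 0 0, -hjMatrix l 1 0; -hjMatrix l 0 1, hjMatrix l 1 1] := by
  induction l with
  | nil => simp [one_fin_two]
  | cons a l ih =>
    rw [List.reverse_cons, hjMatrix_append, ih, hjMatrix_singleton, hjStep]
    ext i j
    fin_cases i <;> fin_cases j <;>
      simp [hjMatrix_cons_zero, hjMatrix_cons_one, mul_apply, Fin.sum_univ_two] <;> ring

lemma hjStep_add_one (a : ℤ) : hjStep (a + 1) = hjStep a * !![1, 0; -1, 1] := by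
  simp [hjStep]

theorem hj_eq_hjMatrix_div : ∀ l : List ℤ, l ≠ [] → (∀ b ∈ l, 2 ≤ b) →
    hj l = (hjMatrix l 0 0 : ℚ) / hjMatrix l 1 0 ∧
      0 < hjMatrix l 1 0 ∧ hjMatrix l 1 0 < hjMatrix l 0 0
  | [a], _, hb => by
    have := hb a (by simp)
    simp only [hj, hjMatrix_singleton, hjStep, of_apply, cons_val', cons_val_zero,
      cons_val_one, empty_val', cons_val_fin_one, Int.cast_one, div_one, true_and]
    omega
  | a :: b :: l, _, hb => by
    obtain ⟨ih, hpos, hlt⟩ :=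
      hj_eq_hjMatrix_div (b :: l) (by simp) fun x hx ↦ hb x (List.mem_cons_of_mem a hx)
    have ha := hb a (by simp)
    rw [hjMatrix_cons_zero a (b :: l), hjMatrix_cons_one a (b :: l)]
    refine ⟨?_, hpos.trans hlt, by nlinarith⟩
    rw [show hj (a :: b :: l) = a - 1 / hj (b :: l) from rfl, ih]
    have : (hjMatrix (b :: l) 1 0 : ℚ) ≠ 0 := by exact_mod_cast hpos.ne'
    have : (hjMatrix (b :: l) 0 0 : ℚ) ≠ 0 := by exact_mod_cast (hpos.trans hlt).ne'
    push_cast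
    field_simp

lemma hjMatrix_two_cons_reverse_append_succ (a : ℤ) (t : List ℤ) :
    hjMatrix (2 :: (t.reverse ++ [a + 1])) 0 0 =
        2 * hjMatrix (a :: t) 0 0 + 2 * hjMatrix (a :: t) 1 0 + hjMatrix (a :: t) 0 1 +
          hjMatrix (a :: t) 1 1 ∧
      hjMatrix (2 :: (t.reverse ++ [a + 1])) 1 0 =
        hjMatrix (a :: t) 0 0 + hjMatrix (a :: t) 1 0 := by
  have h : hjMatrix (2 :: (t.reverse ++ [a + 1])) =
      hjStep 2 * hjMatrix (a :: t).reverse * !![1, 0; -1, 1] := by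
    rw [hjMatrix_cons, hjMatrix_append, hjMatrix_singleton, hjStep_add_one, List.reverse_cons,
      hjMatrix_append, hjMatrix_singleton, mul_assoc, mul_assoc]
  rw [h, hjMatrix_reverse]
  constructor
  · simp [hjStep, mul_apply, Fin.sum_univ_two]
    ring
  · simp [hjStep, mul_apply, Fin.sum_univ_two]

theorem hj_two_cons_reverse_append_succ {a : ℤ} {t : List ℤ} (hb : ∀ b ∈ a :: t, 2 ≤ b) :
    hj (2 :: (t.reverse ++ [a + 1])) =
        ((2 * hjMatrix (a :: t) 0 0 + 2 * hjMatrix (a :: t) 1 0 + hjMatrix (a :: t) 0 1 +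
          hjMatrix (a :: t) 1 1 : ℤ) : ℚ) /
          ((hjMatrix (a :: t) 0 0 + hjMatrix (a :: t) 1 0 : ℤ) : ℚ) ∧
      hjMatrix (a :: t) 0 0 + hjMatrix (a :: t) 1 0 <
        2 * hjMatrix (a :: t) 0 0 + 2 * hjMatrix (a :: t) 1 0 + hjMatrix (a :: t) 0 1 +
          hjMatrix (a :: t) 1 1 := by
  have hb' : ∀ b ∈ 2 :: (t.reverse ++ [a + 1]), 2 ≤ b := by
    have := hb a (by simp)
    simp only [List.mem_cons, List.mem_append, List.mem_reverse, List.not_mem_nil, or_false]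
    rintro b (rfl | hbt | rfl)
    exacts [le_rfl, hb b (List.mem_cons_of_mem a hbt), by omega]
  obtain ⟨h00, h10⟩ := hjMatrix_two_cons_reverse_append_succ a t
  obtain ⟨hval, -, hlt⟩ := hj_eq_hjMatrix_div _ (by simp) hb'
  rw [h00, h10] at hval hlt
  exact ⟨hval, hlt⟩

theorem eq_of_dvd_mul_sub_one {n q x y : ℤ} (hq : IsCoprime q n) (hx : n ∣ q * x - 1)
    (hy : n ∣ q * y - 1) (hx0 : 0 < x) (hxn : x < n) (hy0 : 0 < y) (hyn : y < n) : x = y := by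
  have : n ∣ x - y := hq.symm.dvd_of_dvd_mul_left <| by
    convert dvd_sub hx hy using 1; ring
  linarith [Int.eq_zero_of_abs_lt_dvd this (abs_sub_lt_iff.mpr ⟨by linarith, by linarith⟩)]

theorem stmt1_general (n q q' m : ℤ) (hq0 : 0 < q)
    (hcop : IsCoprime q n)
    (hq'0 : 0 < q') (hq'n : q' < n) (hmod : n ∣ q * q' - 1)
    (hm : q * q' = 1 + m * n)
    (L : List ℤ) (hL : L ≠ []) (hb : ∀ b ∈ L, 2 ≤ b)
    (hval : hj L = (n : ℚ) / (q : ℚ)) :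
    0 < q + n ∧ q + n < 2 * q - m + 2 * n - q' ∧
      hj (2 :: (L.tail.reverse ++ [L.headI + 1])) =
        ((2 * q - m + 2 * n - q' : ℤ) : ℚ) / ((q + n : ℤ) : ℚ) ∧
      (2 * q - m + 2 * n - q') ∣ ((2 * q - m) * (q + n) - 1) := by
  obtain ⟨a, t, rfl⟩ := List.exists_cons_of_ne_nil hL
  have hdet := det_hjMatrix (a :: t)
  obtain ⟨hjM, hM10, hM⟩ := hj_eq_hjMatrix_div _ hL hb
  obtain ⟨-, hM01, hM01'⟩ := hj_eq_hjMatrix_div _ (List.reverse_ne_nil_iff.mpr hL)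
    fun b hb' ↦ hb b (List.mem_reverse.mp hb')
  obtain ⟨htarget, hlt⟩ := hj_two_cons_reverse_append_succ hb
  rw [det_fin_two] at hdet
  simp only [hjMatrix_reverse, of_apply, cons_val', cons_val_zero, cons_val_one, empty_val',
    cons_val_fin_one] at hM01 hM01'
  generalize hjMatrix (a :: t) 0 0 = p, hjMatrix (a :: t) 0 1 = r,
    hjMatrix (a :: t) 1 0 = q₀, hjMatrix (a :: t) 1 1 = s at *
  obtain ⟨rfl, rfl⟩ := Rat.div_int_inj hq0 hM10 (Int.isCoprime_iff_gcd_eq_one.mp hcop.symm)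
    (Int.isCoprime_iff_gcd_eq_one.mp ⟨s, -r, by linarith⟩) (hval.symm.trans hjM)
  obtain rfl : q' = -r :=
    eq_of_dvd_mul_sub_one hcop hmod ⟨-s, by linarith⟩ hq'0 hq'n hM01 hM01'
  obtain rfl : s = -m :=
    mul_left_cancel₀ (by omega : n ≠ 0) (by linear_combination hdet - hm)
  refine ⟨by omega, by linarith, ?_, ⟨q, by linear_combination hm⟩⟩
  simp only [List.tail_cons, List.headI_cons]
  convert htarget using 3 <;> ring

/-- Let `n > 2` and `0 < q < n` be coprime, let `n/q = [b₁,…,bₛ]` be its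
Hirzebruch–Jung continued fraction expansion with all `bᵢ ≥ 2`, let `q'` be the
inverse of `q` mod `n` with `0 < q' < n`, and let `m` satisfy `q·q' = 1 + m·n`.
With `N = 2q − m + 2n − q'` and `Q' = q + n`, we have `0 < Q' < N` and the
reversed sequence `[2, bₛ, …, b₂, b₁+1]` is the Hirzebruch–Jung continued
fraction expansion of `N/Q'`; equivalently `Q' = q + n` is the multiplicative
inverse of `Q = 2q − m` modulo `N`. -/
theorem stmt1 (n q q' m : ℤ) (hn : 2 < n) (hq0 : 0 < q) (hqn : q < n)
    (hcop : IsCoprime q n)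
    (hq'0 : 0 < q') (hq'n : q' < n) (hmod : n ∣ q * q' - 1)
    (hm : q * q' = 1 + m * n)
    (L : List ℤ) (hL : L ≠ []) (hb : ∀ b ∈ L, 2 ≤ b)
    (hval : hj L = (n : ℚ) / (q : ℚ)) :
    0 < q + n ∧ q + n < 2 * q - m + 2 * n - q' ∧
      hj (2 :: (L.tail.reverse ++ [L.headI + 1])) =
        ((2 * q - m + 2 * n - q' : ℤ) : ℚ) / ((q + n : ℤ) : ℚ) ∧
      (2 * q - m + 2 * n - q') ∣ ((2 * q - m) * (q + n) - 1) :=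
  stmt1_general n q q' m hq0 hcop hq'0 hq'n hmod hm L hL hb hval
end

section
/- Let n > 2 and 0 < q < n be coprime integers, let q' be the unique integer with 0 < q' < n and q·q' ≡ 1 (mod n), and let m be the integer determined by q·q' = 1 + m·n. Set N = 2q − m + 2n − q', Q = 2q − m and Q' = q + n. If 2 + q + q' < n, then (2 + q + q')/n < (2 + Q + Q')/N; equivalently, (2(N − 1) − Q − Q')/N < (2(n − 1) − q − q')/n. -/
/-!
Put `s = 2 + q + q'` and `k = N - n = (q - m) + q + (n - q')`. The bound `q' < n` in
`q q' = 1 + m n` forces `m < q`, so `k > 0`; moreover `2 + Q + Q' = s + k`. Hence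
`(2 + Q + Q')/N = (s + k)/(n + k)` lies strictly between `s/n < 1` and `1`. The second
inequality is the first one subtracted from `2`.
-/

theorem div_lt_add_div_add {K : Type*} [Field K] [LinearOrder K] [IsStrictOrderedRing K]
    {a b k : K} (hb : 0 < b) (hk : 0 < k) (hab : a < b) : a / b < (a + k) / (b + k) := by
  rw [div_lt_div_iff₀ hb (by positivity)]
  nlinarith [mul_lt_mul_of_pos_left hab hk]

theorem lt_of_mul_eq_one_add_mul {R : Type*} [CommRing R] [LinearOrder R] [IsStrictOrderedRing R]
    {n q q' m : R} (hm : q * q' = 1 + m * n) (hq : 0 < q)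
    (hq'n : q' < n) (hn : 0 < n) : m < q := by
  nlinarith [mul_lt_mul_of_pos_left hq'n hq]

theorem mul_sub_div_lt_mul_sub_div {K : Type*} [Field K] [LinearOrder K] [IsStrictOrderedRing K]
    {a b c d : K} (t : K) (hb : b ≠ 0) (hd : d ≠ 0) (h : a / b < c / d) :
    (t * d - c) / d < (t * b - a) / b := by
  rw [sub_div, sub_div, mul_div_cancel_right₀ _ hb, mul_div_cancel_right₀ _ hd]
  linarith

theorem stmt6_general (n q q' m : ℤ) (hn : 2 < n) (hq0 : 0 < q)
    (hq'n : q' < n)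
    (hm : q * q' = 1 + m * n)
    (hlt : 2 + q + q' < n) :
    ((2 + q + q' : ℤ) : ℚ) / (n : ℚ) <
        ((2 + (2 * q - m) + (q + n) : ℤ) : ℚ) / ((2 * q - m + 2 * n - q' : ℤ) : ℚ) ∧
      ((2 * ((2 * q - m + 2 * n - q') - 1) - (2 * q - m) - (q + n) : ℤ) : ℚ) /
          ((2 * q - m + 2 * n - q' : ℤ) : ℚ) <
        ((2 * (n - 1) - q - q' : ℤ) : ℚ) / (n : ℚ) := by
  have hmq : m < q := lt_of_mul_eq_one_add_mul hm hq0 hq'n (by omega)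
  have hn0 : (0 : ℚ) < n := by exact_mod_cast (by omega : 0 < n)
  have hN : (0 : ℚ) < ((2 * q - m + 2 * n - q' : ℤ) : ℚ) := by exact_mod_cast (by omega)
  have hk : (0 : ℚ) < ((q - m + q + (n - q') : ℤ) : ℚ) := by exact_mod_cast (by omega)
  have hs : ((2 + q + q' : ℤ) : ℚ) < n := by exact_mod_cast hlt
  have hfirst : ((2 + q + q' : ℤ) : ℚ) / (n : ℚ) <
      ((2 + (2 * q - m) + (q + n) : ℤ) : ℚ) / ((2 * q - m + 2 * n - q' : ℤ) : ℚ) := by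
    rw [show 2 + (2 * q - m) + (q + n) = 2 + q + q' + (q - m + q + (n - q')) by ring,
      show 2 * q - m + 2 * n - q' = n + (q - m + q + (n - q')) by ring]
    exact_mod_cast div_lt_add_div_add hn0 hk hs
  refine ⟨hfirst, ?_⟩
  rw [show 2 * ((2 * q - m + 2 * n - q') - 1) - (2 * q - m) - (q + n)
      = 2 * (2 * q - m + 2 * n - q') - (2 + (2 * q - m) + (q + n)) by ring,
    show 2 * (n - 1) - q - q' = 2 * n - (2 + q + q') by ring]
  exact_mod_cast mul_sub_div_lt_mul_sub_div 2 hn0.ne' hN.ne' hfirst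

/-- Let `n > 2` and `0 < q < n` be coprime integers, let `q'` be the unique
integer with `0 < q' < n` and `q·q' ≡ 1 (mod n)`, and let `m` be the integer
determined by `q·q' = 1 + m·n`. Set `N = 2q − m + 2n − q'`, `Q = 2q − m` and
`Q' = q + n`. If `2 + q + q' < n`, then `(2 + q + q')/n < (2 + Q + Q')/N`;
equivalently `(2(N − 1) − Q − Q')/N < (2(n − 1) − q − q')/n`. -/
theorem stmt6 (n q q' m : ℤ) (hn : 2 < n) (hq0 : 0 < q) (hqn : q < n)
    (hcop : IsCoprime q n)
    (hq'0 : 0 < q') (hq'n : q' < n) (hmod : n ∣ q * q' - 1)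
    (hm : q * q' = 1 + m * n)
    (hlt : 2 + q + q' < n) :
    ((2 + q + q' : ℤ) : ℚ) / (n : ℚ) <
        ((2 + (2 * q - m) + (q + n) : ℤ) : ℚ) / ((2 * q - m + 2 * n - q' : ℤ) : ℚ) ∧
      ((2 * ((2 * q - m + 2 * n - q') - 1) - (2 * q - m) - (q + n) : ℤ) : ℚ) /
          ((2 * q - m + 2 * n - q' : ℤ) : ℚ) <
        ((2 * (n - 1) - q - q' : ℤ) : ℚ) / (n : ℚ) :=
  stmt6_general n q q' m hn hq0 hq'n hm hlt
end

section
/- Let 0 < a < n be coprime integers, and let n/a = [x_1,…,x_f] and n/(n−a) = [y_1,…,y_g] be the Hirzebruch–Jung continued fraction expansions with all entries ≥ 2. Then for the sequence (a_1,…,a_{f+g+1}) := (x_1,…,x_f, 1, y_g,…,y_1), the numerator sequence defined by P_{−1} = 0, P_0 = 1, P_{i+1} = a_{i+1}·P_i − P_{i−1} satisfies P_{f+g+1} = 0; that is, the continued fraction [x_1,…,x_f, 1, y_g,…,y_1] equals 0. -/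
/-- The numerator sequence of a sequence `a`: `Pseq a (i+1)` is the number
`P_i` determined by `P_{-1} = 0`, `P_0 = 1` and `P_{i+1} = a_{i+1}·P_i − P_{i−1}`,
where `a k` denotes `a_{k+1}` (0-indexed access). -/
def Pseq (a : ℕ → ℤ) : ℕ → ℤ
  | 0 => 0
  | 1 => 1
  | (k + 2) => a k * Pseq a (k + 1) - Pseq a k

/-- Two inverses in `[0, n)`, of `a` and of `-a` modulo `n`, add up to `n`. -/
lemma Int.add_eq_of_mul_add_mul_eq_one {n a u u' v v' : ℤ} (hn : 1 < n)
    (hu0 : 0 ≤ u) (hun : u < n) (hu'0 : 0 ≤ u') (hu'n : u' < n)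
    (hu : u * a + n * v = 1) (hu' : u' * (n - a) + n * v' = 1) :
    u + u' = n := by
  have hcop : IsCoprime n a := ⟨v, u, by linear_combination hu⟩
  obtain ⟨c, hc⟩ : n ∣ u + u' :=
    hcop.dvd_of_dvd_mul_right ⟨u' + v' - v, by linear_combination hu - hu'⟩
  have hc_pos : 0 < c := by
    by_contra! hc0
    have hu_zero : u = 0 := by nlinarith
    have hn_dvd : n ∣ 1 := ⟨v, by linear_combination -hu + a * hu_zero⟩
    have := Int.le_of_dvd one_pos hn_dvd
    omega
  have hc_one : c = 1 := by
    have : c < 2 := by nlinarith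
    omega
  simpa [hc_one] using hc

namespace HirzebruchJung

section CommRing

variable {R : Type*} [CommRing R]

def stepMatrix (a : R) : Matrix (Fin 2) (Fin 2) R := !![a, -1; 1, 0]

/-- For `l = [a₁,…,aₛ]` this is `!![Pₛ, -Pₛ₋₁; Qₛ, -Qₛ₋₁]`, where `Pᵢ / Qᵢ = [a₁,…,aᵢ]`. -/
def continuantMatrix (l : List R) : Matrix (Fin 2) (Fin 2) R := (l.map stepMatrix).prod

@[simp]
lemma continuantMatrix_nil : continuantMatrix ([] : List R) = 1 := rfl

@[simp]
lemma continuantMatrix_cons (a : R) (l : List R) :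
    continuantMatrix (a :: l) = stepMatrix a * continuantMatrix l := by
  simp [continuantMatrix]

@[simp]
lemma continuantMatrix_append (l m : List R) :
    continuantMatrix (l ++ m) = continuantMatrix l * continuantMatrix m := by
  simp [continuantMatrix]

lemma continuantMatrix_concat (l : List R) (a : R) :
    continuantMatrix (l ++ [a]) = continuantMatrix l * stepMatrix a := by
  simp

lemma stepMatrix_mul (a : R) (A : Matrix (Fin 2) (Fin 2) R) :
    stepMatrix a * A = !![a * A 0 0 - A 1 0, a * A 0 1 - A 1 1; A 0 0, A 0 1] := by
  conv_lhs => rw [stepMatrix, Matrix.eta_fin_two A, Matrix.mul_fin_two]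
  ring_nf

lemma mul_stepMatrix (a : R) (A : Matrix (Fin 2) (Fin 2) R) :
    A * stepMatrix a = !![a * A 0 0 + A 0 1, -A 0 0; a * A 1 0 + A 1 1, -A 1 0] := by
  conv_lhs => rw [stepMatrix, Matrix.eta_fin_two A, Matrix.mul_fin_two]
  ring_nf

lemma continuantMatrix_cons_apply (a : R) (l : List R) :
    continuantMatrix (a :: l) 0 0 = a * continuantMatrix l 0 0 - continuantMatrix l 1 0 ∧
      continuantMatrix (a :: l) 1 0 = continuantMatrix l 0 0 := by
  rw [continuantMatrix_cons, stepMatrix_mul]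
  exact ⟨rfl, rfl⟩

lemma det_continuantMatrix (l : List R) : (continuantMatrix l).det = 1 := by
  induction l with
  | nil => simp
  | cons a l ih =>
    rw [continuantMatrix_cons, Matrix.det_mul, ih, mul_one, stepMatrix, Matrix.det_fin_two_of]
    ring

lemma isCoprime_continuantMatrix (l : List R) :
    IsCoprime (continuantMatrix l 0 0) (continuantMatrix l 1 0) := by
  have h := det_continuantMatrix l
  rw [Matrix.det_fin_two] at h
  exact ⟨continuantMatrix l 1 1, -continuantMatrix l 0 1, by linear_combination h⟩

lemma continuantMatrix_reverse (l : List R) :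
    continuantMatrix l.reverse = !![continuantMatrix l 0 0, -continuantMatrix l 1 0;
      -continuantMatrix l 0 1, continuantMatrix l 1 1] := by
  induction l with
  | nil => exact Matrix.one_fin_two.trans (by simp)
  | cons a l ih =>
    rw [List.reverse_cons, continuantMatrix_concat, ih, mul_stepMatrix, continuantMatrix_cons,
      stepMatrix_mul]
    simp only [Matrix.of_apply, Matrix.cons_val', Matrix.cons_val_zero, Matrix.cons_val_one,
      Matrix.cons_val_fin_one]
    ring_nf

lemma continuantMatrix_append_one_reverse_zero_zero (l m : List R) :
    continuantMatrix (l ++ 1 :: m.reverse) 0 0 =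
      (continuantMatrix l 0 0 + continuantMatrix l 0 1) * continuantMatrix m 0 0 +
        continuantMatrix l 0 0 * continuantMatrix m 0 1 := by
  rw [continuantMatrix_append, continuantMatrix_cons, ← mul_assoc, mul_stepMatrix,
    continuantMatrix_reverse, Matrix.mul_apply, Fin.sum_univ_two]
  simp only [Matrix.of_apply, Matrix.cons_val', Matrix.cons_val_zero, Matrix.cons_val_one,
    Matrix.cons_val_fin_one]
  ring

end CommRing

section Ordered

variable {R : Type*} [CommRing R] [LinearOrder R] [IsStrictOrderedRing R]

lemma continuantMatrix_one_zero_nonneg_lt {l : List R} (hl : ∀ x ∈ l, 2 ≤ x) :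
    0 ≤ continuantMatrix l 1 0 ∧ continuantMatrix l 1 0 < continuantMatrix l 0 0 := by
  induction l with
  | nil => simp
  | cons a l ih =>
    obtain ⟨h0, h1⟩ := ih fun x hx => hl x (List.mem_cons_of_mem a hx)
    have ha : 2 ≤ a := hl a List.mem_cons_self
    obtain ⟨e0, e1⟩ := continuantMatrix_cons_apply a l
    rw [e0, e1]
    constructor <;> nlinarith

lemma continuantMatrix_zero_zero_pos {l : List R} (hl : ∀ x ∈ l, 2 ≤ x) :
    0 < continuantMatrix l 0 0 :=
  (continuantMatrix_one_zero_nonneg_lt hl).1.trans_lt (continuantMatrix_one_zero_nonneg_lt hl).2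

/-- The reversed list has the same numerator, and `-Pₛ₋₁` as its denominator. -/
lemma neg_continuantMatrix_zero_one_nonneg_lt {l : List R} (hl : ∀ x ∈ l, 2 ≤ x) :
    0 ≤ -continuantMatrix l 0 1 ∧ -continuantMatrix l 0 1 < continuantMatrix l 0 0 := by
  have h := continuantMatrix_one_zero_nonneg_lt (l := l.reverse) fun x hx =>
    hl x (List.mem_reverse.mp hx)
  simpa [continuantMatrix_reverse] using h

end Ordered

/-- This also holds for `l = []`, because `1 / hj [] = 1 / 0 = 0`. -/
lemma hj_cons (a : ℤ) (l : List ℤ) : hj (a :: l) = a - 1 / hj l := by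
  cases l <;> simp [hj]

lemma hj_eq_div {l : List ℤ} (hl : ∀ x ∈ l, 2 ≤ x) :
    hj l = ((continuantMatrix l 0 0 : ℤ) : ℚ) / (continuantMatrix l 1 0 : ℤ) := by
  induction l with
  | nil => simp [hj]
  | cons a l ih =>
    have hl' : ∀ x ∈ l, 2 ≤ x := fun x hx => hl x (List.mem_cons_of_mem a hx)
    have hpos : (0 : ℚ) < (continuantMatrix l 0 0 : ℤ) := by
      exact_mod_cast continuantMatrix_zero_zero_pos hl'
    obtain ⟨e0, e1⟩ := continuantMatrix_cons_apply a l
    rw [hj_cons, ih hl', e0, e1]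
    push_cast
    field_simp

lemma continuantMatrix_eq_of_hj_eq {l : List ℤ} {n q : ℤ} (hq : 0 < q) (hn : n ≠ 0)
    (hc : IsCoprime q n) (hl : ∀ x ∈ l, 2 ≤ x) (hv : hj l = (n : ℚ) / q) :
    continuantMatrix l 0 0 = n ∧ continuantMatrix l 1 0 = q := by
  rw [hj_eq_div hl] at hv
  have hden : 0 < continuantMatrix l 1 0 := by
    refine (continuantMatrix_one_zero_nonneg_lt hl).1.lt_of_ne' fun h => ?_
    rw [h, Int.cast_zero, div_zero, eq_comm, div_eq_zero_iff] at hv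
    exact hv.elim (by exact_mod_cast hn) (by exact_mod_cast hq.ne')
  exact Rat.div_int_inj hden hq
    (Int.isCoprime_iff_gcd_eq_one.mp (isCoprime_continuantMatrix l))
    (Int.isCoprime_iff_gcd_eq_one.mp hc.symm) hv

lemma continuantMatrix_map_range_top_row (a : ℕ → ℤ) (m : ℕ) :
    continuantMatrix ((List.range m).map a) 0 0 = Pseq a (m + 1) ∧
      continuantMatrix ((List.range m).map a) 0 1 = -Pseq a m := by
  induction m with
  | zero => simp [Pseq]
  | succ m ih =>
    obtain ⟨h0, h1⟩ := ih
    rw [List.range_succ, List.map_append, List.map_singleton, continuantMatrix_concat,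
      mul_stepMatrix]
    refine ⟨?_, congrArg Neg.neg h0⟩
    change a m * _ + _ = a m * Pseq a (m + 1) - Pseq a m
    rw [h0, h1]
    ring

lemma Pseq_getD_length_succ (L : List ℤ) :
    Pseq (fun k => L.getD k 1) (L.length + 1) = continuantMatrix L 0 0 := by
  have h : (List.range L.length).map (fun k => L.getD k 1) = L :=
    List.ext_getElem (by simp) fun i _ hi => by simp [hi]
  rw [← (continuantMatrix_map_range_top_row _ L.length).1, h]

end HirzebruchJung

open HirzebruchJung

theorem stmt7_general (n a : ℤ) (ha0 : 0 < a) (han : a < n) (hcop : IsCoprime a n)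
    (X Y : List ℤ)
    (hX2 : ∀ x ∈ X, 2 ≤ x) (hY2 : ∀ y ∈ Y, 2 ≤ y)
    (hXval : hj X = (n : ℚ) / (a : ℚ))
    (hYval : hj Y = (n : ℚ) / ((n - a : ℤ) : ℚ)) :
    Pseq (fun k => (X ++ 1 :: Y.reverse).getD k 1) (X.length + Y.length + 2) = 0 := by
  have hcop' : IsCoprime (n - a) n := by
    obtain ⟨s, t, h⟩ := hcop
    exact ⟨-s, s + t, by linear_combination h⟩
  obtain ⟨hXn, hXa⟩ := continuantMatrix_eq_of_hj_eq ha0 (by omega) hcop hX2 hXval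
  obtain ⟨hYn, hYa⟩ := continuantMatrix_eq_of_hj_eq (by omega) (by omega) hcop' hY2 hYval
  have hdetX := det_continuantMatrix X
  have hdetY := det_continuantMatrix Y
  rw [Matrix.det_fin_two, hXn, hXa] at hdetX
  rw [Matrix.det_fin_two, hYn, hYa] at hdetY
  obtain ⟨hu0, hun⟩ := neg_continuantMatrix_zero_one_nonneg_lt hX2
  obtain ⟨hu'0, hu'n⟩ := neg_continuantMatrix_zero_one_nonneg_lt hY2
  rw [hXn] at hun
  rw [hYn] at hu'n
  have hsum := Int.add_eq_of_mul_add_mul_eq_one (a := a) (v := continuantMatrix X 1 1)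
    (v' := continuantMatrix Y 1 1) (by omega) hu0 hun hu'0 hu'n
    (by linear_combination hdetX) (by linear_combination hdetY)
  have hlen : X.length + Y.length + 2 = (X ++ 1 :: Y.reverse).length + 1 := by
    rw [List.length_append, List.length_cons, List.length_reverse]
    omega
  rw [hlen, Pseq_getD_length_succ, continuantMatrix_append_one_reverse_zero_zero, hXn, hYn]
  linear_combination (-n) * hsum

/-- Let `0 < a < n` be coprime, and let `n/a = [x₁,…,x_f]` and
`n/(n−a) = [y₁,…,y_g]` be the Hirzebruch–Jung continued fraction expansions
with all entries `≥ 2`. Then for the sequence `(x₁,…,x_f, 1, y_g,…,y₁)` of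
length `f+g+1`, the numerator sequence satisfies `P_{f+g+1} = 0`; i.e. the
continued fraction `[x₁,…,x_f, 1, y_g,…,y₁]` equals `0`. -/
theorem stmt7 (n a : ℤ) (ha0 : 0 < a) (han : a < n) (hcop : IsCoprime a n)
    (X Y : List ℤ) (hX : X ≠ []) (hY : Y ≠ [])
    (hX2 : ∀ x ∈ X, 2 ≤ x) (hY2 : ∀ y ∈ Y, 2 ≤ y)
    (hXval : hj X = (n : ℚ) / (a : ℚ))
    (hYval : hj Y = (n : ℚ) / ((n - a : ℤ) : ℚ)) :
    Pseq (fun k => (X ++ 1 :: Y.reverse).getD k 1) (X.length + Y.length + 2) = 0 :=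
  stmt7_general n a ha0 han hcop X Y hX2 hY2 hXval hYval
end

section
/- Every core is admissible for chains; that is, if [e_1,…,e_s] is a sequence of integers with all e_i ≥ 2 and either s = 1 and e_1 ≥ 4, or s ≥ 2 and e_1 ≥ 3 and e_s ≥ 3, then for every k ≥ 0 the sequence consisting of k+1 consecutive copies of (e_1,…,e_s) separated by k single entries equal to 1 is admissible. -/
/-- A finite sequence `a₁,…,aₛ` is admissible if `P_i > 0` for `i = 0,…,s−1`. -/
def Admissible (L : List ℤ) : Prop :=
  ∀ i < L.length, 0 < Pseq (fun k => L.getD k 1) (i + 1)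

/-- `chainSeq L k` consists of `k+1` consecutive copies of `L` separated by
`k` single entries equal to `1`. -/
def chainSeq (L : List ℤ) : ℕ → List ℤ
  | 0 => L
  | (k + 1) => chainSeq L k ++ 1 :: L

/-!
Along the infinite periodic chain `e₁ … eₛ 1 e₁ … eₛ 1 …` the ratio `P_{n-1} / P_n` stays below
`2` at the start of each block, below `1` inside it and below `1/2` just before the separating `1`.
Indeed an entry `e` turns a bound `ρ` into `1 / (e - ρ)`: the entry `e₁ ≥ 3` brings `2` down to
`1` (or `e₁ ≥ 4` to `1/2` when `s = 1`), entries `≥ 2` keep `1`, `eₛ ≥ 3` brings `1` down to `1/2`,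
and the separator `1` turns `1/2` back into `2`. In particular every `P_n` is positive, and each
chain of `k + 1` copies is a prefix of the infinite one.
-/

lemma List.headI_eq_getD_zero {α : Type*} [Inhabited α] {l : List α} (d : α) (h : l ≠ []) :
    l.headI = l.getD 0 d := by
  cases l with
  | nil => contradiction
  | cons x t => rfl

lemma List.getLast!_eq_getD {α : Type*} [Inhabited α] {l : List α} (d : α) (h : l ≠ []) :
    l.getLast! = l.getD (l.length - 1) d := by
  have hl : l.length - 1 < l.length := Nat.sub_one_lt (List.length_pos_iff.mpr h).ne'
  rw [List.getD_eq_getElem l d hl, List.getLast!_eq_getElem!, getElem!_pos l _ hl]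

lemma succ_mod_eq_ite (n s : ℕ) :
    (n + 1) % (s + 1) = if n % (s + 1) = s then 0 else n % (s + 1) + 1 := by
  rcases Nat.eq_zero_or_pos s with rfl | hs
  · simp [Nat.mod_one]
  rw [Nat.add_mod_eq_ite, Nat.mod_eq_of_lt (show 1 < s + 1 by omega)]
  have := Nat.mod_lt n (show 0 < s + 1 by omega)
  split_ifs <;> omega

lemma Pseq_congr {a b : ℕ → ℤ} {n : ℕ} (h : ∀ k, k + 2 ≤ n → a k = b k) :
    Pseq a n = Pseq b n := by
  induction n using Nat.strong_induction_on with
  | _ n ih =>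
    match n with
    | 0 | 1 => rfl
    | k + 2 =>
      simp only [Pseq]
      rw [h k le_rfl, ih (k + 1) (by omega) (fun j hj => h j (by omega)),
        ih k (by omega) (fun j hj => h j (by omega))]

lemma Pseq_pair_induction {a : ℕ → ℤ} (S : ℕ → ℤ → ℤ → Prop) (h0 : S 0 0 1)
    (hstep : ∀ n p q, S n p q → S (n + 1) q (a n * q - p)) (n : ℕ) :
    S n (Pseq a n) (Pseq a (n + 1)) := by
  induction n with
  | zero => exact h0
  | succ n ih => exact hstep n _ _ ih

/-- In terms of ratios: if `p / q < v / u` and `e ≥ u' / v' + v / u`, then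
`q / (e q - p) < v' / u'`. -/
lemma ratio_bound_step {u v u' v' e p q : ℤ} (hu : 0 < u) (hv : 0 < v) (hv' : 0 < v')
    (he : u * u' + v * v' ≤ u * v' * e) (hp : 0 ≤ p) (hpq : u * p < v * q) :
    0 ≤ q ∧ u' * q < v' * (e * q - p) := by
  have hq : 0 < q := pos_of_mul_pos_right (by nlinarith) hv.le
  refine ⟨hq.le, lt_of_mul_lt_mul_left ?_ hu.le⟩
  nlinarith [mul_lt_mul_of_pos_left hpq hv', mul_le_mul_of_nonneg_right he hq.le]

/-- The infinite chain `e₁, …, eₛ, 1, e₁, …, eₛ, 1, …`; the separators are the default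
value of `getD`. -/
def periodicChain (E : List ℤ) (n : ℕ) : ℤ :=
  E.getD (n % (E.length + 1)) 1

lemma chainSeq_length_add_one (E : List ℤ) (k : ℕ) :
    (chainSeq E k).length + 1 = (k + 1) * (E.length + 1) := by
  induction k with
  | zero => simp [chainSeq]
  | succ k ih =>
    simp only [chainSeq, List.length_append, List.length_cons]
    rw [add_mul, ← ih]
    ring

lemma chainSeq_getD (E : List ℤ) (k n : ℕ) (hn : n < (chainSeq E k).length) :
    (chainSeq E k).getD n 1 = periodicChain E n := by
  induction k generalizing n with
  | zero =>
    simp only [chainSeq, periodicChain] at hn ⊢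
    rw [Nat.mod_eq_of_lt (by omega)]
  | succ k ih =>
    have hlen := chainSeq_length_add_one E k
    simp only [chainSeq, List.length_append, List.length_cons] at hn ⊢
    rcases Nat.lt_or_ge n (chainSeq E k).length with h | h
    · rw [List.getD_append _ _ _ _ h, ih n h]
    · rw [List.getD_append_right _ _ _ _ h, periodicChain]
      obtain ⟨j, hj⟩ := Nat.exists_eq_add_of_le h
      match j with
      | 0 =>
        have hsep : n % (E.length + 1) = E.length := by
          rw [show n = E.length + k * (E.length + 1) by nlinarith, Nat.add_mul_mod_self_right,
            Nat.mod_eq_of_lt (by omega)]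
        rw [hsep, List.getD_eq_default _ _ le_rfl, show n - (chainSeq E k).length = 0 by omega]
        rfl
      | d + 1 =>
        have hd : n % (E.length + 1) = d := by
          rw [show n = d + (k + 1) * (E.length + 1) by omega, Nat.add_mul_mod_self_right,
            Nat.mod_eq_of_lt (by omega)]
        rw [hd, show n - (chainSeq E k).length = d + 1 by omega, List.getD_cons_succ]

def IsCore (E : List ℤ) : Prop :=
  (∀ e ∈ E, 2 ≤ e) ∧
    ((E.length = 1 ∧ 4 ≤ E.headI) ∨ (2 ≤ E.length ∧ 3 ≤ E.headI ∧ 3 ≤ E.getLast!))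

namespace IsCore

variable {E : List ℤ}

lemma length_pos (hE : IsCore E) : 0 < E.length := by
  rcases hE.2 with ⟨h, _⟩ | ⟨h, _⟩ <;> omega

lemma ne_nil (hE : IsCore E) : E ≠ [] :=
  List.length_pos_iff.mp hE.length_pos

lemma two_le_getD (hE : IsCore E) {r : ℕ} (hr : r < E.length) : 2 ≤ E.getD r 1 := by
  rw [List.getD_eq_getElem E 1 hr]
  exact hE.1 _ (List.getElem_mem hr)

lemma three_le_getD_zero (hE : IsCore E) : 3 ≤ E.getD 0 1 := by
  rw [← List.headI_eq_getD_zero 1 hE.ne_nil]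
  rcases hE.2 with ⟨_, h⟩ | ⟨_, h, _⟩ <;> linarith

lemma four_le_getD_zero_of_length_eq_one (hE : IsCore E) (h : E.length = 1) :
    4 ≤ E.getD 0 1 := by
  rw [← List.headI_eq_getD_zero 1 hE.ne_nil]
  rcases hE.2 with ⟨_, h⟩ | ⟨h', _⟩
  · exact h
  · omega

lemma three_le_getD_last (hE : IsCore E) (h : 2 ≤ E.length) :
    3 ≤ E.getD (E.length - 1) 1 := by
  rw [← List.getLast!_eq_getD 1 hE.ne_nil]
  rcases hE.2 with ⟨h', _⟩ | ⟨_, _, h'⟩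
  · omega
  · exact h'

end IsCore

/-- `Pseq (periodicChain E) n / Pseq (periodicChain E) (n + 1) < boundNum E n / boundDen E n`
is the invariant along the chain. -/
def boundNum (E : List ℤ) (n : ℕ) : ℤ := if n % (E.length + 1) = 0 then 2 else 1

def boundDen (E : List ℤ) (n : ℕ) : ℤ := if n % (E.length + 1) = E.length then 2 else 1

lemma boundNum_pos (E : List ℤ) (n : ℕ) : 0 < boundNum E n := by
  unfold boundNum; split_ifs <;> norm_num

lemma boundDen_pos (E : List ℤ) (n : ℕ) : 0 < boundDen E n := by
  unfold boundDen; split_ifs <;> norm_num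

lemma IsCore.bound_step {E : List ℤ} (hE : IsCore E) (n : ℕ) :
    boundDen E n * boundDen E (n + 1) + boundNum E n * boundNum E (n + 1) ≤
      boundDen E n * boundNum E (n + 1) * periodicChain E n := by
  have hr := Nat.mod_lt n (show 0 < E.length + 1 by omega)
  unfold boundDen boundNum periodicChain
  rw [succ_mod_eq_ite]
  generalize n % (E.length + 1) = r at hr ⊢
  have hsep : r = E.length → E.getD r 1 = 1 := fun h => List.getD_eq_default _ _ h.ge
  have hmid : r < E.length → 2 ≤ E.getD r 1 := hE.two_le_getD
  have hfirst : r = 0 → 3 ≤ E.getD r 1 := by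
    rintro rfl; exact hE.three_le_getD_zero
  have hsingle : r = 0 → E.length = 1 → 4 ≤ E.getD r 1 := by
    rintro rfl; exact hE.four_le_getD_zero_of_length_eq_one
  have hlast : r + 1 = E.length → 2 ≤ E.length → 3 ≤ E.getD r 1 := by
    intro hlast hs2; rw [show r = E.length - 1 by omega]; exact hE.three_le_getD_last hs2
  have hs := hE.length_pos
  generalize E.getD r 1 = e at *
  split_ifs <;> omega

lemma IsCore.Pseq_periodicChain_pos {E : List ℤ} (hE : IsCore E) (n : ℕ) :
    0 < Pseq (periodicChain E) (n + 1) := by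
  have hbound := Pseq_pair_induction (a := periodicChain E)
    (fun n p q => 0 ≤ p ∧ boundDen E n * p < boundNum E n * q)
    ⟨le_rfl, by simp [boundDen, boundNum]⟩
    (fun n _ _ ⟨hp, hpq⟩ => ratio_bound_step (boundDen_pos E n) (boundNum_pos E n)
      (boundNum_pos E (n + 1)) (hE.bound_step n) hp hpq) n
  exact pos_of_mul_pos_right ((mul_nonneg (boundDen_pos E n).le hbound.1).trans_lt hbound.2)
    (boundNum_pos E n).le

/-- Every core is admissible for chains: if `[e₁,…,eₛ]` is a sequence of
integers with all `eᵢ ≥ 2` and either `s = 1` and `e₁ ≥ 4`, or `s ≥ 2`,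
`e₁ ≥ 3` and `eₛ ≥ 3`, then for every `k ≥ 0` the sequence consisting of
`k+1` consecutive copies of `(e₁,…,eₛ)` separated by `k` single entries equal
to `1` is admissible. -/
theorem stmt8 (E : List ℤ) (h2 : ∀ e ∈ E, 2 ≤ e)
    (hcore : (E.length = 1 ∧ 4 ≤ E.headI) ∨
      (2 ≤ E.length ∧ 3 ≤ E.headI ∧ 3 ≤ E.getLast!)) :
    ∀ k : ℕ, Admissible (chainSeq E k) := by
  intro k i hi
  rw [Pseq_congr (b := periodicChain E) fun j hj => chainSeq_getD E k j (by omega)]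
  exact IsCore.Pseq_periodicChain_pos ⟨h2, hcore⟩ i
end

section
/- Let [b_1,…,b_r] be a sequence of integers, all ≥ 2, that is admissible for chains. Then b_1 ≥ 3 or b_r ≥ 3. -/
/-!
If both end entries of `L` were `2`, the chain `L, 1, L, 1, L` would contain the block `2, 1, 2`
followed by a further entry. When that block occupies the entries `a_{n+1}, a_{n+2}, a_{n+3}`,
the recursion gives `P_{n+3} = -P_{n-1} ≤ 0`, contradicting admissibility.
-/

lemma Pseq_add_four_of_two_one_two (a : ℕ → ℤ) (n : ℕ) (h₀ : a n = 2) (h₁ : a (n + 1) = 1)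
    (h₂ : a (n + 2) = 2) : Pseq a (n + 4) = -Pseq a n := by
  simp only [Pseq, h₀, h₁, h₂]
  ring

lemma Admissible.Pseq_nonneg {L : List ℤ} (h : Admissible L) {n : ℕ} (hn : n ≤ L.length) :
    0 ≤ Pseq (fun k => L.getD k 1) n := by
  cases n with
  | zero => exact le_rfl
  | succ n => exact (h n hn).le

lemma not_admissible_append_two_one_two (L R : List ℤ) (hR : R ≠ []) :
    ¬ Admissible (L ++ 2 :: 1 :: 2 :: R) := by
  intro h
  have hpos := h (L.length + 3) (by simpa using List.length_pos_iff.mpr hR)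
  have hzero := h.Pseq_nonneg (n := L.length) (by simp)
  rw [Pseq_add_four_of_two_one_two _ L.length (by simp) (by simp) (by simp)] at hpos
  omega

/-- If `[b₁,…,b_r]` (all entries `≥ 2`) is admissible for chains, then
`b₁ ≥ 3` or `b_r ≥ 3`. -/
theorem stmt10 (L : List ℤ) (hne : L ≠ []) (h2 : ∀ b ∈ L, 2 ≤ b)
    (hadm : ∀ k : ℕ, Admissible (chainSeq L k)) :
    3 ≤ L.headI ∨ 3 ≤ L.getLast! := by
  by_contra! hlt
  obtain ⟨c, M, hc⟩ := List.exists_cons_of_ne_nil hne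
  obtain ⟨L', b, hb⟩ := (List.eq_nil_or_concat' L).resolve_left hne
  have hc_lt : c < 3 := by simpa [hc] using hlt.1
  have hb_lt : b < 3 := by simpa [hb, List.getLast!_eq_getLast?_getD] using hlt.2
  have hc2 : c = 2 := by have := h2 c (by simp [hc]); omega
  have hb2 : b = 2 := by have := h2 b (by simp [hb]); omega
  have hchain : chainSeq L 2 = L' ++ 2 :: 1 :: 2 :: (M ++ 1 :: L) := by
    calc chainSeq L 2 = (L' ++ [b]) ++ 1 :: (c :: M) ++ 1 :: L := by rw [← hb, ← hc]; rfl
      _ = L' ++ 2 :: 1 :: 2 :: (M ++ 1 :: L) := by simp [hb2, hc2]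
  exact not_admissible_append_two_one_two L' _ (by simp) (hchain ▸ hadm 2)
end

section
/- Let r ≥ 1 and let b_1,…,b_r be integers, all ≥ 2. Let a_1,…,a_r be the discrepancies of [b_1,…,b_r], and let a'_1,…,a'_{r+1} be the discrepancies of the sequence [b_1 + 1, b_2, …, b_r, 2]. Then a_j > a'_j for every j = 1,…,r. -/
/-!
A discrete minimum principle: if `x (j - 1) + x (j + 1) ≤ c j * x j` with `c j ≥ 2` at the interior
points and `x ≥ 0` at both ends, then `x ≥ 0`, and `x` can vanish at an interior point only if it
vanishes at every point to the left of it. Applied to `-a'` and `a' + 1` this gives `a' ≤ 0` and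
`a' 1 > -1`. The difference `a - a'` solves the system for `[b₁, …, b_r]` with right-hand side
`-(a' 1 + 1) < 0` at `j = 1` and `0` elsewhere, and boundary values `0` and `-a' (r + 1) ≥ 0`, so the
minimum principle makes it strictly positive in the interior.
-/

namespace Tridiagonal

variable {K : Type*} [CommRing K] [LinearOrder K] [IsStrictOrderedRing K]

def IsSupersolution (c : ℕ → K) (n : ℕ) (x : ℕ → K) : Prop :=
  ∀ j, 1 ≤ j → j ≤ n → x (j - 1) + x (j + 1) ≤ c j * x j

variable {c x : ℕ → K} {n : ℕ}

/-- At an interior minimum `m ≤ 0` we get `x (j - 1) + x (j + 1) ≤ c j * m ≤ 2 * m`, which forces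
both neighbours to equal `m` as well. -/
theorem IsSupersolution.eq_of_eq_min (hx : IsSupersolution c n x)
    (hc : ∀ j, 1 ≤ j → j ≤ n → 2 ≤ c j) {m : K} (hm : m ≤ 0) (hmin : ∀ i ≤ n + 1, m ≤ x i)
    {j : ℕ} (hj : j ≤ n) (hxj : x j = m) : ∀ i ≤ j, x i = m := by
  induction j with
  | zero => intro i hi; rwa [Nat.le_zero.1 hi]
  | succ k ih =>
    have hk : x k = m := by
      have hsup := hx (k + 1) (by omega) hj
      have hcm : c (k + 1) * m ≤ 2 * m := mul_le_mul_of_nonpos_right (hc _ (by omega) hj) hm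
      rw [Nat.add_sub_cancel, hxj] at hsup
      linarith [hmin k (by omega), hmin (k + 2) (by omega)]
    intro i hi
    rcases Nat.le_succ_iff.1 hi with hi | rfl
    · exact ih (by omega) hk i hi
    · exact hxj

theorem IsSupersolution.nonneg (hx : IsSupersolution c n x)
    (hc : ∀ j, 1 ≤ j → j ≤ n → 2 ≤ c j) (h0 : 0 ≤ x 0) (hn : 0 ≤ x (n + 1)) :
    ∀ i ≤ n + 1, 0 ≤ x i := by
  obtain ⟨j, hj, hmin⟩ := (Finset.range (n + 2)).exists_min_image x ⟨0, by simp⟩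
  rw [Finset.mem_range] at hj
  have hmin' : ∀ i ≤ n + 1, x j ≤ x i := fun i hi => hmin i (Finset.mem_range.2 (by omega))
  by_contra! hneg
  obtain ⟨i, hi, hxi⟩ := hneg
  have hxj : x j < 0 := (hmin' i hi).trans_lt hxi
  have hjn : j ≤ n := by
    by_contra! hjn
    rw [show j = n + 1 by omega] at hxj
    exact hxj.not_ge hn
  have := hx.eq_of_eq_min hc hxj.le hmin' hjn rfl 0 (Nat.zero_le _)
  linarith

theorem IsSupersolution.pos_of_pos_zero (hx : IsSupersolution c n x)
    (hc : ∀ j, 1 ≤ j → j ≤ n → 2 ≤ c j) (h0 : 0 < x 0) (hn : 0 ≤ x (n + 1)) :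
    ∀ j ≤ n, 0 < x j := by
  have hnonneg := hx.nonneg hc h0.le hn
  intro j hj
  refine (hnonneg j (by omega)).lt_of_ne fun hxj => ?_
  have := hx.eq_of_eq_min hc le_rfl hnonneg hj hxj.symm 0 (Nat.zero_le _)
  exact h0.ne' this

theorem IsSupersolution.pos_of_lt_one (hx : IsSupersolution c n x)
    (hc : ∀ j, 1 ≤ j → j ≤ n → 2 ≤ c j) (h0 : 0 ≤ x 0) (hn : 0 ≤ x (n + 1))
    (h1 : x 0 + x 2 < c 1 * x 1) : ∀ j, 1 ≤ j → j ≤ n → 0 < x j := by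
  have hnonneg := hx.nonneg hc h0 hn
  intro j hj1 hjn
  refine (hnonneg j (by omega)).lt_of_ne fun hxj => ?_
  have hx1 := hx.eq_of_eq_min hc le_rfl hnonneg hjn hxj.symm 1 hj1
  rw [hx1, mul_zero] at h1
  linarith [hnonneg 2 (by omega)]

def SolvesDiscrepancyEquations (c : ℕ → K) (n : ℕ) (x : ℕ → K) : Prop :=
  ∀ j, 1 ≤ j → j ≤ n → -c j * x j + x (j - 1) + x (j + 1) = c j - 2

theorem SolvesDiscrepancyEquations.isSupersolution_neg (hx : SolvesDiscrepancyEquations c n x)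
    (hc : ∀ j, 1 ≤ j → j ≤ n → 2 ≤ c j) : IsSupersolution c n (-x) := by
  intro j hj1 hjn
  simp only [Pi.neg_apply]
  linarith [hx j hj1 hjn, hc j hj1 hjn]

theorem SolvesDiscrepancyEquations.isSupersolution_add_one
    (hx : SolvesDiscrepancyEquations c n x) : IsSupersolution c n (x + 1) := by
  intro j hj1 hjn
  simp only [Pi.add_apply, Pi.one_apply]
  linarith [hx j hj1 hjn]

/-- Subtracting the two systems leaves the source `-(y 1 + 1)` at `j = 1` and no source elsewhere. -/
theorem SolvesDiscrepancyEquations.sub_lt_at_one {c' y : ℕ → K}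
    (hx : SolvesDiscrepancyEquations c n x) (hy : SolvesDiscrepancyEquations c' n y) (hn : 1 ≤ n)
    (h1 : c' 1 = c 1 + 1) (hy1 : 0 < y 1 + 1) : (x - y) 0 + (x - y) 2 < c 1 * (x - y) 1 := by
  have hy' := hy 1 le_rfl hn
  rw [h1] at hy'
  simp only [Pi.sub_apply]
  linarith [hx 1 le_rfl hn]

theorem SolvesDiscrepancyEquations.isSupersolution_sub {c' y : ℕ → K}
    (hx : SolvesDiscrepancyEquations c n x) (hy : SolvesDiscrepancyEquations c' n y)
    (h1 : c' 1 = c 1 + 1) (hmid : ∀ j, 2 ≤ j → j ≤ n → c' j = c j) (hy1 : 0 < y 1 + 1) :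
    IsSupersolution c n (x - y) := by
  intro j hj1 hjn
  rcases eq_or_lt_of_le hj1 with rfl | hj2
  · exact (hx.sub_lt_at_one hy hjn h1 hy1).le
  · have hy' := hy j hj1 hjn
    rw [hmid j hj2 hjn] at hy'
    simp only [Pi.sub_apply]
    linarith [hx j hj1 hjn]

end Tridiagonal

open Tridiagonal

/-- Let `r ≥ 1` and let `b₁,…,b_r` be integers, all `≥ 2`. Let `a₁,…,a_r` be
the discrepancies of `[b₁,…,b_r]`, i.e. the unique rationals satisfying (with
the convention `a₀ = a_{r+1} = 0`) the equations
`−bⱼ·aⱼ + a_{j−1} + a_{j+1} = bⱼ − 2` for `j = 1,…,r`, and let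
`a'₁,…,a'_{r+1}` be the discrepancies of `[b₁ + 1, b₂, …, b_r, 2]`. Then
`aⱼ > a'ⱼ` for every `j = 1,…,r`. -/
theorem stmt14 (r : ℕ) (hr : 1 ≤ r) (b : ℕ → ℤ)
    (hb : ∀ j : ℕ, 1 ≤ j → j ≤ r → 2 ≤ b j)
    (a : ℕ → ℚ) (ha0 : a 0 = 0) (har : a (r + 1) = 0)
    (ha : ∀ j : ℕ, 1 ≤ j → j ≤ r →
      -(b j : ℚ) * a j + a (j - 1) + a (j + 1) = (b j : ℚ) - 2)
    (b' : ℕ → ℤ) (hb'1 : b' 1 = b 1 + 1)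
    (hb'mid : ∀ j : ℕ, 2 ≤ j → j ≤ r → b' j = b j) (hb'last : b' (r + 1) = 2)
    (a' : ℕ → ℚ) (ha'0 : a' 0 = 0) (ha'r : a' (r + 2) = 0)
    (ha' : ∀ j : ℕ, 1 ≤ j → j ≤ r + 1 →
      -(b' j : ℚ) * a' j + a' (j - 1) + a' (j + 1) = (b' j : ℚ) - 2) :
    ∀ j : ℕ, 1 ≤ j → j ≤ r → a' j < a j := by
  have hb' : ∀ j, 1 ≤ j → j ≤ r + 1 → (2 : ℚ) ≤ b' j := by
    intro j hj1 hjr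
    norm_cast
    rcases eq_or_lt_of_le hj1 with rfl | hj2
    · linarith [hb 1 le_rfl hr]
    rcases eq_or_lt_of_le hjr with rfl | hjr
    · rw [hb'last]
    · rw [hb'mid j hj2 (by omega)]; exact hb j hj1 (by omega)
  have ha'eq : SolvesDiscrepancyEquations (fun j => (b' j : ℚ)) (r + 1) a' := ha'
  have ha'_nonpos : a' (r + 1) ≤ 0 := by
    simpa using (ha'eq.isSupersolution_neg hb').nonneg hb' (by simp [ha'0]) (by simp [ha'r])
      (r + 1) (by omega)
  have ha'1 : 0 < a' 1 + 1 := by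
    simpa using ha'eq.isSupersolution_add_one.pos_of_pos_zero hb' (by simp [ha'0])
      (by simp [ha'r]) 1 (by omega)
  have haeq : SolvesDiscrepancyEquations (fun j => (b j : ℚ)) r a := ha
  have ha'eq_r : SolvesDiscrepancyEquations (fun j => (b' j : ℚ)) r a' :=
    fun j hj1 hjr => ha' j hj1 (by omega)
  have hb'1q : (b' 1 : ℚ) = b 1 + 1 := by exact_mod_cast hb'1
  have hb'midq : ∀ j, 2 ≤ j → j ≤ r → (b' j : ℚ) = b j := fun j hj2 hjr => by
    rw [hb'mid j hj2 hjr]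
  intro j hj1 hjr
  simpa [sub_pos] using (haeq.isSupersolution_sub ha'eq_r hb'1q hb'midq ha'1).pos_of_lt_one
    (fun j hj1 hjr => by exact_mod_cast hb j hj1 hjr) (by simp [ha0, ha'0])
    (by simp [har, ha'_nonpos]) (haeq.sub_lt_at_one ha'eq_r hr hb'1q ha'1) j hj1 hjr
end
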